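/- Let x be a recognisable series over alphabet {0,…,q−1} that is compatible (x(b0) = x(b) for all words b, where b0 appends the letter 0). Define y : ℕ → K by y(n) = x(b_n), where b_n is the standard q-ary expansion of n. Then for every word b, x(b) = y(val(b)); moreover, if (u, M, w) is a minimal linear representation of x, then y is q-regular with linear representation (u, M, w). -/

import Mathlib

def qval (q : ℕ) : List (Fin q) → ℕ
  | [] => 0
  | a :: t => a.val + q * qval q t

def expn (q : ℕ) (hq : 2 ≤ q) : ℕ → List (Fin q)
  | 0 => []
  | n+1 => ⟨(n+1) % q, Nat.mod_lt _ (by exact Nat.lt_of_lt_of_le (by decide) hq)⟩ :: expn q hq ((n+1)/q)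
  decreasing_by exact Nat.div_lt_self (Nat.succ_pos n) (by omega)

lemma expn_pos (q : ℕ) (hq : 2 ≤ q) (n : ℕ) (hn : n ≠ 0) :
    expn q hq n = ⟨n % q, Nat.mod_lt _ (by exact Nat.lt_of_lt_of_le (by decide) hq)⟩ :: expn q hq (n / q) := by
  cases n with
  | zero => omega
  | succ m => simp [expn]

lemma qval_expn (q : ℕ) (hq : 2 ≤ q) : ∀ n, qval q (expn q hq n) = n := by
  intro n
  induction n using Nat.strong_induction_on with
  | _ n ih =>
    cases n with
    | zero => simp [expn, qval]
    | succ m =>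
      rw [expn_pos q hq (m+1) (by omega), qval,
        ih ((m+1)/q) (Nat.div_lt_self (by omega) (by omega))]
      exact Nat.mod_add_div (m+1) q

lemma expn_ne_nil (q : ℕ) (hq : 2 ≤ q) (n : ℕ) (hn : n ≠ 0) : expn q hq n ≠ [] := by
  rw [expn_pos q hq n hn]; simp

lemma getLast?_expn (q : ℕ) (hq : 2 ≤ q) : ∀ n,
    (expn q hq n).getLast? ≠ some ⟨0, by exact Nat.lt_of_lt_of_le (by decide) hq⟩ := by
  intro n
  induction n using Nat.strong_induction_on with
  | _ n ih =>
    rcases Nat.eq_zero_or_pos n with h | h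
    · subst h; simp [expn]
    rw [expn_pos q hq n (by omega)]
    rcases Nat.eq_zero_or_pos (n / q) with h2 | h2
    · have hlt : n < q := (Nat.div_eq_zero_iff.mp h2).resolve_left (by omega)
      rw [h2, expn]
      simp only [List.getLast?_singleton, ne_eq, Option.some.injEq]
      intro hcon
      have := congrArg Fin.val hcon
      simp [Nat.mod_eq_of_lt hlt] at this
      omega
    · obtain ⟨a, t, ht⟩ := List.exists_cons_of_ne_nil (expn_ne_nil q hq (n/q) (by omega))
      have := ih (n / q) (Nat.div_lt_self (by omega) (by omega))
      rw [ht] at this ⊢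
      rwa [List.getLast?_cons_cons]

lemma qval_append_zero (q : ℕ) (hq : 2 ≤ q) (b : List (Fin q)) :
    qval q (b ++ [⟨0, by exact Nat.lt_of_lt_of_le (by decide) hq⟩]) = qval q b := by
  induction b with
  | nil => simp [qval]
  | cons a t ih => simp [qval, ih]

lemma expn_mul_add (q : ℕ) (hq : 2 ≤ q) (n : ℕ) (r : Fin q) (h : q * n + r.val ≠ 0) :
    expn q hq (q * n + r.val) = r :: expn q hq n := by
  rw [expn_pos q hq _ h]
  congr 1
  · ext
    simp [Nat.mul_add_mod, Nat.mod_eq_of_lt r.isLt]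
  · congr 1
    rw [Nat.mul_add_div (by omega), Nat.div_eq_of_lt r.isLt, Nat.add_zero]

lemma M0w_eq {K : Type*} [Field K] {q D : ℕ} (hq : 2 ≤ q)
    (x : List (Fin q) → K)
    (hcomp : ∀ b : List (Fin q), x (b ++ [⟨0, by exact Nat.lt_of_lt_of_le (by decide) hq⟩]) = x b)
    (u : Matrix (Fin 1) (Fin D) K) (M : Fin q → Matrix (Fin D) (Fin D) K)
    (w : Matrix (Fin D) (Fin 1) K)
    (hrep : ∀ b : List (Fin q), x b = (u * (b.map M).prod * w) 0 0)
    (hmin : ∀ (D' : ℕ) (u' : Matrix (Fin 1) (Fin D') K)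
        (M' : Fin q → Matrix (Fin D') (Fin D') K) (w' : Matrix (Fin D') (Fin 1) K),
        (∀ b : List (Fin q), x b = (u' * (b.map M').prod * w') 0 0) → D ≤ D') :
    M ⟨0, by exact Nat.lt_of_lt_of_le (by decide) hq⟩ * w = w := by
  classical
  -- the "state evaluation" map
  set Φ : (Fin D → K) →ₗ[K] (List (Fin q) → K) :=
    LinearMap.pi fun b => (LinearMap.proj 0).comp (Matrix.mulVecLin (u * (b.map M).prod))
    with hΦdef
  have hΦ : ∀ ζ b, Φ ζ b = ((u * (b.map M).prod).mulVec ζ) 0 := fun ζ b => rfl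
  -- the shift operators
  set S : Fin q → (List (Fin q) → K) →ₗ[K] (List (Fin q) → K) :=
    fun r => LinearMap.pi fun b => LinearMap.proj (b ++ [r]) with hSdef
  have hS : ∀ r f b, S r f b = f (b ++ [r]) := fun r f b => rfl
  have hcommute : ∀ (r : Fin q) ζ, Φ ((M r).mulVec ζ) = S r (Φ ζ) := by
    intro r ζ
    funext b
    rw [hΦ, hS, hΦ, Matrix.mulVec_mulVec, List.map_append, List.prod_append,
      List.map_singleton, List.prod_singleton, Matrix.mul_assoc]
  set V := LinearMap.range Φ with hVdef
  haveI : FiniteDimensional K V := inferInstance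
  set d := Module.finrank K V with hddef
  set e : V ≃ₗ[K] (Fin d → K) := (Module.finBasis K V).equivFun with hedef
  have hinv : ∀ r : Fin q, ∀ f ∈ V, S r f ∈ V := by
    rintro r f ⟨ζ, rfl⟩
    exact ⟨(M r).mulVec ζ, hcommute r ζ⟩
  set T : Fin q → (V →ₗ[K] V) := fun r => (S r).restrict (hinv r) with hTdef
  have hT : ∀ (r : Fin q) (v : V), (T r v : List (Fin q) → K) = S r v := fun r v => rfl
  set M' : Fin q → Matrix (Fin d) (Fin d) K :=
    fun r => LinearMap.toMatrix' (e.toLinearMap ∘ₗ T r ∘ₗ e.symm.toLinearMap) with hM'def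
  have hM' : ∀ (r : Fin q) (v : V), (M' r).mulVec (e v) = e (T r v) := by
    intro r v
    rw [hM'def]
    rw [← Matrix.toLin'_apply, Matrix.toLin'_toMatrix']
    simp
  set wvec : Fin D → K := fun j => w j 0 with hwvecdef
  set w0 : V := ⟨Φ wvec, ⟨wvec, rfl⟩⟩ with hw0def
  set w' : Matrix (Fin d) (Fin 1) K := Matrix.of fun i _ => e w0 i with hw'def
  set ev : V →ₗ[K] K := (LinearMap.proj ([] : List (Fin q))).comp V.subtype with hevdef
  set evd : (Fin d → K) →ₗ[K] K := ev ∘ₗ e.symm.toLinearMap with hevddef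
  set u' : Matrix (Fin 1) (Fin d) K :=
    Matrix.of fun _ j => evd (fun k => if j = k then 1 else 0) with hu'def
  have hΦw : ∀ ζ, Φ ζ ∈ V := fun ζ => ⟨ζ, rfl⟩
  -- the key state computation
  have hstate : ∀ b : List (Fin q),
      ((b.map M').prod).mulVec (e w0)
        = e ⟨Φ (((b.map M).prod).mulVec wvec), hΦw _⟩ := by
    intro b
    induction b with
    | nil =>
      simp only [List.map_nil, List.prod_nil, Matrix.one_mulVec]
      rfl
    | cons a t ih =>
      simp only [List.map_cons, List.prod_cons]
      rw [← Matrix.mulVec_mulVec, ih, hM']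
      congr 1
      refine Subtype.ext ?_
      show S a (Φ (((t.map M).prod).mulVec wvec)) = Φ ((M a * (t.map M).prod).mulVec wvec)
      rw [← hcommute, Matrix.mulVec_mulVec]
  -- the small representation represents x
  have hrep' : ∀ b : List (Fin q), x b = (u' * (b.map M').prod * w') 0 0 := by
    intro b
    have h1 : (u' * (b.map M').prod * w') 0 0
        = ∑ j, u' 0 j * (((b.map M').prod).mulVec (e w0)) j := by
      rw [Matrix.mul_assoc, Matrix.mul_apply]
      refine Finset.sum_congr rfl fun j _ => ?_
      rw [Matrix.mul_apply]
      simp [Matrix.mulVec, dotProduct, hw'def]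
    rw [h1, hstate]
    have h2 : ∑ j, u' 0 j * (e ⟨Φ (((b.map M).prod).mulVec wvec), hΦw _⟩) j
        = evd (e ⟨Φ (((b.map M).prod).mulVec wvec), hΦw _⟩) := by
      rw [LinearMap.pi_apply_eq_sum_univ evd]
      refine Finset.sum_congr rfl fun j _ => ?_
      rw [smul_eq_mul, mul_comm]
      rfl
    rw [h2, hevddef]
    simp only [LinearMap.coe_comp, Function.comp_apply, LinearEquiv.coe_coe,
      LinearEquiv.symm_apply_apply]
    rw [hevdef]
    simp only [LinearMap.coe_comp, Function.comp_apply, Submodule.coe_subtype,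
      LinearMap.proj_apply]
    rw [hΦ, hrep b]
    simp only [List.map_nil, List.prod_nil, Matrix.mul_one]
    rw [Matrix.mulVec_mulVec, Matrix.mul_apply]
    simp [Matrix.mulVec, dotProduct, hwvecdef]
  -- minimality forces d = D, so Φ is injective
  have hDd : D ≤ d := hmin d u' M' w' hrep'
  have hdD : d ≤ D := (LinearMap.finrank_range_le Φ).trans_eq (Module.finrank_fin_fun K)
  have hker : LinearMap.ker Φ = ⊥ := by
    have h3 := LinearMap.finrank_range_add_finrank_ker Φ
    rw [Module.finrank_fin_fun, ← hVdef, ← hddef] at h3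
    have h4 : Module.finrank K (LinearMap.ker Φ) = 0 := by omega
    exact Submodule.finrank_eq_zero.mp h4
  have hinj : Function.Injective Φ := LinearMap.ker_eq_bot.mp hker
  -- compatibility gives Φ (M₀ w) = Φ w
  have hz : Φ ((M ⟨0, by exact Nat.lt_of_lt_of_le (by decide) hq⟩).mulVec wvec) = Φ wvec := by
    rw [hcommute]
    funext b
    rw [hS]
    have hxw : ∀ c : List (Fin q), Φ wvec c = x c := by
      intro c
      rw [hΦ, hrep c, Matrix.mul_apply]
      simp [Matrix.mulVec, dotProduct, hwvecdef]
    rw [hxw, hxw, hcomp]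
  have hv : (M ⟨0, by exact Nat.lt_of_lt_of_le (by decide) hq⟩).mulVec wvec = wvec := hinj hz
  ext i j
  have hj : j = 0 := Subsingleton.elim j 0
  subst hj
  have h5 := congrFun hv i
  rw [Matrix.mul_apply]
  simp only [Matrix.mulVec, dotProduct, hwvecdef] at h5
  exact h5

/-- for a compatible recognisable series x, the sequence y(n) = x(b_n)
(b_n the standard q-ary expansion of n) satisfies x(b) = y(val(b)) for all words b, and a
minimal linear representation of x is a linear representation of the q-regular sequence y. -/
theorem stmt_19 {K : Type*} [Field K] (q D : ℕ) (hq : 2 ≤ q)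
    (x : List (Fin q) → K)
    (hcomp : ∀ b : List (Fin q), x (b ++ [⟨0, by omega⟩]) = x b)
    (y : ℕ → K)
    (hy : ∀ b : List (Fin q), b.getLast? ≠ some ⟨0, by omega⟩ → y (qval q b) = x b)
    (u : Matrix (Fin 1) (Fin D) K) (M : Fin q → Matrix (Fin D) (Fin D) K)
    (w : Matrix (Fin D) (Fin 1) K)
    (hrep : ∀ b : List (Fin q), x b = (u * (b.map M).prod * w) 0 0)
    (hmin : ∀ (D' : ℕ) (u' : Matrix (Fin 1) (Fin D') K)
        (M' : Fin q → Matrix (Fin D') (Fin D') K) (w' : Matrix (Fin D') (Fin 1) K),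
        (∀ b : List (Fin q), x b = (u' * (b.map M').prod * w') 0 0) → D ≤ D') :
    (∀ b : List (Fin q), x b = y (qval q b)) ∧
    ∃ v : ℕ → Matrix (Fin D) (Fin 1) K,
      v 0 = w ∧
      (∀ n : ℕ, y n = (u * v n) 0 0) ∧
      (∀ (n : ℕ) (r : Fin q), v (q * n + r.val) = M r * v n) := by
  have hM0w : M ⟨0, by omega⟩ * w = w := M0w_eq hq x hcomp u M w hrep hmin
  constructor
  · intro b
    induction b using List.reverseRecOn with
    | nil => exact (hy [] (by simp)).symm
    | append_singleton c a ih =>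
      by_cases ha : a = ⟨0, by omega⟩
      · subst ha
        rw [hcomp, ih, qval_append_zero q hq]
      · refine (hy (c ++ [a]) ?_).symm
        simpa using fun h => ha (by exact h)
  · refine ⟨fun n => ((expn q hq n).map M).prod * w, ?_, ?_, ?_⟩
    · simp [expn]
    · intro n
      have h1 : y n = x (expn q hq n) := by
        have := hy (expn q hq n) (getLast?_expn q hq n)
        rwa [qval_expn q hq n] at this
      rw [h1, hrep, Matrix.mul_assoc]
    · intro n r
      show ((expn q hq (q * n + r.val)).map M).prod * w
          = M r * (((expn q hq n).map M).prod * w)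
      by_cases h : q * n + r.val = 0
      · have h1 : q * n = 0 ∧ r.val = 0 := by omega
        have hn : n = 0 := by
          rcases Nat.mul_eq_zero.mp h1.1 with h' | h' <;> omega
        have hr : r = ⟨0, by omega⟩ := Fin.ext (by simpa using h1.2)
        rw [hn, hr]
        simp [expn, hM0w]
      · rw [expn_mul_add q hq n r h]
        simp [Matrix.mul_assoc]
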